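/- Let E = { (1/(2m) + 1/(2(m+1))) : m ∈ ℕ } and let μ be the probability measure on E with μ({x_m}) = γ/m², γ = (Σ_{m≥1} m^{-2})^{-1} = 6/π². Then for every r ∈ (0,∞), the quantization dimension of order r of μ exists and equals D_r(μ) = 1/(2 + 1/r) = r/(2r+1). -/

import Mathlib

open MeasureTheory Filter
open scoped ENNReal NNReal

/-- The `n`-th quantization error of order `r` of a measure `μ` on `ℝ`. -/
noncomputable def quantErr (μ : Measure ℝ) (r : ℝ) (n : ℕ) : ENNReal :=
  ⨅ (A : Finset ℝ) (_ : A.card ≤ n), ∫⁻ x, ⨅ a ∈ A, edist x a ^ r ∂μ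

/-- The points `x_m = ½(1/m + 1/(m+1))`, for `m ≥ 1`. -/
noncomputable def xm (m : ℕ) : ℝ := (1 / (m : ℝ) + 1 / ((m : ℝ) + 1)) / 2

/-- The discrete measure `μ` with `μ({x_m}) = γ/m²` for `m ≥ 1`,
where `γ = (∑ m⁻²)⁻¹ = 6/π²`. -/
noncomputable def μE : Measure ℝ :=
  Measure.sum fun m : ℕ =>
    ENNReal.ofReal ((6 / Real.pi ^ 2) / ((m : ℝ) + 1) ^ 2) • Measure.dirac (xm (m + 1))

noncomputable def gam : ℝ := 6 / Real.pi ^ 2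

lemma gam_pos : 0 < gam := by
  have := Real.pi_pos; unfold gam; positivity

lemma gam_le_one : gam ≤ 1 := by
  have h := Real.pi_gt_three
  have : (9:ℝ) ≤ Real.pi ^ 2 := by nlinarith
  rw [gam, div_le_one (by nlinarith)]; nlinarith

lemma lint (f : ℝ → ℝ≥0∞) :
    ∫⁻ x, f x ∂μE
      = ∑' m : ℕ, ENNReal.ofReal (gam / ((m:ℝ)+1)^2) * f (xm (m+1)) := by
  simp [μE, lintegral_sum_measure, lintegral_smul_measure, lintegral_dirac, gam]

lemma xm_pos {m : ℕ} (hm : 1 ≤ m) : 0 < xm m := by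
  have : (1:ℝ) ≤ m := by exact_mod_cast hm
  unfold xm; positivity

lemma xm_le {m : ℕ} (hm : 1 ≤ m) : xm m ≤ 1 / m := by
  have h : (1:ℝ) ≤ m := by exact_mod_cast hm
  unfold xm
  have : 1 / ((m:ℝ)+1) ≤ 1 / m := by
    exact one_div_le_one_div_of_le (by linarith) (by linarith)
  linarith

lemma xm_anti {a b : ℕ} (ha : 1 ≤ a) (hab : a ≤ b) : xm b ≤ xm a := by
  have ha' : (1:ℝ) ≤ a := by exact_mod_cast ha
  have hab' : (a:ℝ) ≤ b := by exact_mod_cast hab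
  unfold xm
  gcongr <;> linarith

lemma xm_gap {j : ℕ} (hj : 1 ≤ j) :
    xm j - xm (j+1) = 1 / ((j:ℝ) * (j+2)) := by
  have h : (1:ℝ) ≤ j := by exact_mod_cast hj
  unfold xm
  push_cast
  have h1 : (j:ℝ) ≠ 0 := by linarith
  have h2 : (j:ℝ) + 1 ≠ 0 := by linarith
  have h3 : (j:ℝ) + 2 ≠ 0 := by linarith
  field_simp
  ring

lemma xm_sep {n k k' : ℕ} (hk : 1 ≤ k) (hkk : k < k') (hk' : k' ≤ 3*n) :
    1 / (9*(n:ℝ)^2) ≤ xm k - xm k' := by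
  have hj : 1 ≤ k' - 1 := by omega
  have hkj : k ≤ k' - 1 := by omega
  have h1 : xm (k'-1) ≤ xm k := xm_anti hk hkj
  have h2 : xm (k'-1) - xm k' = 1 / (((k'-1:ℕ):ℝ) * (((k'-1:ℕ):ℝ)+2)) := by
    have := xm_gap hj
    have he : (k'-1) + 1 = k' := by omega
    rwa [he] at this
  have hn1 : 1 ≤ n := by omega
  have hcast : ((k'-1:ℕ):ℝ) = (k':ℝ) - 1 := by
    have : (1:ℝ) ≤ k' := by exact_mod_cast (by omega : 1 ≤ k')
    push_cast [Nat.cast_sub (by omega : 1 ≤ k')]; ring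
  have hk'r : (k':ℝ) ≤ 3*n := by exact_mod_cast hk'
  have hk'2 : (2:ℝ) ≤ k' := by exact_mod_cast (by omega : 2 ≤ k')
  have hnr : (1:ℝ) ≤ n := by exact_mod_cast hn1
  have hden : ((k':ℝ)-1) * ((k':ℝ)-1+2) ≤ 9*(n:ℝ)^2 := by nlinarith
  have hpos : (0:ℝ) < ((k':ℝ)-1) * ((k':ℝ)-1+2) := by nlinarith
  have : 1 / (9*(n:ℝ)^2) ≤ 1 / (((k':ℝ)-1) * ((k':ℝ)-1+2)) := by
    apply one_div_le_one_div_of_le hpos hden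
  rw [hcast] at h2
  linarith

-- tail sum bound (real)
lemma tail_sum (N M : ℕ) (hN : 1 ≤ N) :
    ∑ m ∈ Finset.range M, (if m < N then 0 else gam / ((m:ℝ)+1)^2)
      ≤ gam / N - gam / (max M N) := by
  induction M with
  | zero => simp
  | succ M ih =>
    rw [Finset.sum_range_succ]
    by_cases h : M < N
    · have h1 : max M N = N := by omega
      have h2 : max (M+1) N = N := by omega
      rw [h2]; rw [h1] at ih
      simp only [if_pos h]
      linarith
    · push_neg at h
      have h1 : max M N = M := by omega
      have h2 : max (M+1) N = M+1 := by omega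
      rw [h2]; rw [h1] at ih
      have hM : (1:ℝ) ≤ M := by exact_mod_cast (by omega : 1 ≤ M)
      simp only [if_neg (by omega : ¬ M < N)]
      have key : gam / ((M:ℝ)+1)^2 ≤ gam / M - gam / (M+1) := by
        rw [div_sub_div _ _ (by linarith) (by linarith)]
        have hg := gam_pos
        rw [div_le_div_iff₀ (by positivity) (by positivity)]
        push_cast
        nlinarith
      push_cast
      linarith

lemma tail_sum' (N M : ℕ) (hN : 1 ≤ N) :
    ∑ m ∈ Finset.range M, (if m < N then 0 else gam / ((m:ℝ)+1)^2) ≤ gam / N := by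
  have := tail_sum N M hN
  have hp : (0:ℝ) ≤ gam / (max M N) := by
    have := gam_pos
    have : (0:ℝ) < max M N := by
      have : 1 ≤ max M N := by omega
      exact_mod_cast this
    positivity
  linarith

lemma ub (r : ℝ) (hr : 0 < r) (N : ℕ) (hN : 1 ≤ N) :
    quantErr μE r (2*N+1) ≤ ENNReal.ofReal ((gam / N) * (((N:ℝ)^2)⁻¹)^r) := by
  have hNr : (1:ℝ) ≤ N := by exact_mod_cast hN
  set K : ℝ := (((N:ℝ)^2)⁻¹)^r with hK
  have hK0 : 0 ≤ K := by positivity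
  set A : Finset ℝ := ((Finset.range N).image fun m => xm (m+1)) ∪
    ((Finset.range (N+1)).image fun j : ℕ => (j:ℝ)/(N:ℝ)^2) with hA
  have hcard : A.card ≤ 2*N+1 := by
    refine le_trans (Finset.card_union_le _ _) ?_
    have h1 := Finset.card_image_le (s := Finset.range N) (f := fun m => xm (m+1))
    have h2 := Finset.card_image_le (s := Finset.range (N+1))
      (f := fun j : ℕ => (j:ℝ)/(N:ℝ)^2)
    simp only [Finset.card_range] at h1 h2
    omega
  refine le_trans (iInf₂_le A hcard) ?_
  rw [lint]
  have hbnd : ∀ m : ℕ,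
      ENNReal.ofReal (gam / ((m:ℝ)+1)^2) * (⨅ a ∈ A, edist (xm (m+1)) a ^ r)
        ≤ ENNReal.ofReal (if m < N then 0 else gam / ((m:ℝ)+1)^2 * K) := by
    intro m
    by_cases hm : m < N
    · have hmem : xm (m+1) ∈ A := by
        apply Finset.mem_union_left
        exact Finset.mem_image.2 ⟨m, Finset.mem_range.2 hm, rfl⟩
      have hz : (⨅ a ∈ A, edist (xm (m+1)) a ^ r) = 0 := by
        refine le_antisymm ?_ zero_le
        refine le_trans (biInf_le _ hmem) ?_
        simp [ENNReal.zero_rpow_of_pos hr]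
      simp [hm, hz]
    · push_neg at hm
      have hx0 : 0 < xm (m+1) := xm_pos (by omega)
      have hxle : xm (m+1) ≤ 1/(N:ℝ) := by
        refine le_trans (xm_le (by omega)) ?_
        apply one_div_le_one_div_of_le (by linarith)
        push_cast; exact_mod_cast (by omega : N ≤ m+1)
      set x := xm (m+1) with hx
      set j := ⌊x * (N:ℝ)^2⌋₊ with hj
      have hNpos : (0:ℝ) < N := by linarith
      have hj_le : (j:ℝ) ≤ x * (N:ℝ)^2 := Nat.floor_le (by positivity)
      have hj_lt : x * (N:ℝ)^2 < j + 1 := Nat.lt_floor_add_one _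
      have hjN : j ≤ N := by
        have hle : x * (N:ℝ)^2 ≤ (N:ℝ) := by
          have h1 : x * (N:ℝ)^2 ≤ (1/(N:ℝ)) * (N:ℝ)^2 := by gcongr
          have h2 : (1/(N:ℝ)) * (N:ℝ)^2 = (N:ℝ) := by field_simp
          linarith
        calc j ≤ ⌊(N:ℝ)⌋₊ := Nat.floor_mono hle
        _ = N := Nat.floor_natCast N
      have hmemg : (j:ℝ)/(N:ℝ)^2 ∈ A := by
        apply Finset.mem_union_right
        exact Finset.mem_image.2 ⟨j, Finset.mem_range.2 (by omega), rfl⟩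
      have hN2 : (0:ℝ) < (N:ℝ)^2 := by positivity
      have key : x - (j:ℝ)/(N:ℝ)^2 = (x*(N:ℝ)^2 - j)/(N:ℝ)^2 := by field_simp
      have hdist : |x - (j:ℝ)/(N:ℝ)^2| ≤ ((N:ℝ)^2)⁻¹ := by
        rw [abs_le]
        constructor
        · have h0 : (0:ℝ) ≤ (x*(N:ℝ)^2 - j)/(N:ℝ)^2 :=
            div_nonneg (by linarith) hN2.le
          have h1 : (0:ℝ) ≤ ((N:ℝ)^2)⁻¹ := by positivity
          rw [key]; linarith
        · rw [key]
          calc (x*(N:ℝ)^2 - j)/(N:ℝ)^2 ≤ 1/(N:ℝ)^2 := by gcongr; linarith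
          _ = ((N:ℝ)^2)⁻¹ := one_div _
      have hinf : (⨅ a ∈ A, edist x a ^ r) ≤ ENNReal.ofReal K := by
        refine le_trans (biInf_le _ hmemg) ?_
        rw [edist_dist, Real.dist_eq]
        have h1 : ENNReal.ofReal |x - (j:ℝ)/(N:ℝ)^2| ≤ ENNReal.ofReal (((N:ℝ)^2)⁻¹) :=
          ENNReal.ofReal_le_ofReal hdist
        calc (ENNReal.ofReal |x - (j:ℝ)/(N:ℝ)^2|) ^ r
            ≤ (ENNReal.ofReal (((N:ℝ)^2)⁻¹)) ^ r := ENNReal.rpow_le_rpow h1 hr.le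
        _ = ENNReal.ofReal K := by
            rw [ENNReal.ofReal_rpow_of_pos (by positivity)]
      rw [if_neg (by omega)]
      calc ENNReal.ofReal (gam / ((m:ℝ)+1)^2) * (⨅ a ∈ A, edist x a ^ r)
          ≤ ENNReal.ofReal (gam / ((m:ℝ)+1)^2) * ENNReal.ofReal K := by gcongr
      _ = ENNReal.ofReal (gam / ((m:ℝ)+1)^2 * K) := by
          rw [← ENNReal.ofReal_mul (div_nonneg gam_pos.le (by positivity))]
  refine le_trans (ENNReal.tsum_le_tsum hbnd) ?_
  rw [ENNReal.tsum_eq_iSup_sum]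
  refine iSup_le fun s => ?_
  obtain ⟨M, hM⟩ := s.exists_nat_subset_range
  refine le_trans (Finset.sum_le_sum_of_subset hM) ?_
  rw [← ENNReal.ofReal_sum_of_nonneg (fun m _ => by
    split
    · exact le_refl 0
    · exact mul_nonneg (div_nonneg gam_pos.le (by positivity)) hK0)]
  apply ENNReal.ofReal_le_ofReal
  have : ∀ m : ℕ, (if m < N then (0:ℝ) else gam / ((m:ℝ)+1)^2 * K)
      = (if m < N then (0:ℝ) else gam / ((m:ℝ)+1)^2) * K := by
    intro m; split <;> simp
  simp_rw [this]
  rw [← Finset.sum_mul]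
  exact mul_le_mul_of_nonneg_right (tail_sum' N M hN) hK0

lemma lb (r : ℝ) (hr : 0 < r) (n : ℕ) (hn : 1 ≤ n) :
    ENNReal.ofReal ((n:ℝ) * (gam/(9*(n:ℝ)^2)) * ((18*(n:ℝ)^2)⁻¹)^r)
      ≤ quantErr μE r n := by
  have hnr : (1:ℝ) ≤ n := by exact_mod_cast hn
  set δ : ℝ := (18*(n:ℝ)^2)⁻¹ with hδ
  have hδ0 : 0 < δ := by positivity
  refine le_iInf fun A => le_iInf fun hA => ?_
  rw [lint]
  set S : Finset ℕ := (Finset.Ico n (3*n)).filter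
    (fun m => ∃ a ∈ A, |xm (m+1) - a| < δ) with hS
  -- injection S → A
  have hSA : S.card ≤ A.card := by
    have hmaps : ∀ m ∈ S, (if h : ∃ a ∈ A, |xm (m+1) - a| < δ then h.choose else 0) ∈ A := by
      intro m hm
      have hex : ∃ a ∈ A, |xm (m+1) - a| < δ := (Finset.mem_filter.1 hm).2
      rw [dif_pos hex]
      exact hex.choose_spec.1
    apply Finset.card_le_card_of_injOn _ hmaps
    intro m hm m' hm' heq
    by_contra hne
    have hex : ∃ a ∈ A, |xm (m+1) - a| < δ := (Finset.mem_filter.1 hm).2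
    have hex' : ∃ a ∈ A, |xm (m'+1) - a| < δ := (Finset.mem_filter.1 hm').2
    dsimp only at heq
    rw [dif_pos hex, dif_pos hex'] at heq
    have h1 := hex.choose_spec.2
    have h2 := hex'.choose_spec.2
    rw [heq] at h1
    have hd : |xm (m+1) - xm (m'+1)| < 2*δ := by
      calc |xm (m+1) - xm (m'+1)|
          ≤ |xm (m+1) - hex'.choose| + |xm (m'+1) - hex'.choose| := by
            rw [abs_sub_comm (xm (m'+1)) _]
            exact abs_sub_le _ _ _
      _ < 2*δ := by linarith
    have h2δ : 2*δ = 1/(9*(n:ℝ)^2) := by rw [hδ]; field_simp; ring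
    have hmI := Finset.mem_Ico.1 (Finset.mem_filter.1 hm).1
    have hmI' := Finset.mem_Ico.1 (Finset.mem_filter.1 hm').1
    rcases lt_or_gt_of_ne (fun h => hne (by omega) : m+1 ≠ m'+1) with hlt | hgt
    · have := xm_sep (n := n) (by omega) hlt (by omega)
      have : 1/(9*(n:ℝ)^2) ≤ |xm (m+1) - xm (m'+1)| := le_trans this (le_abs_self _)
      rw [h2δ] at hd; linarith
    · have := xm_sep (n := n) (by omega : 1 ≤ m'+1) hgt (by omega)
      have : 1/(9*(n:ℝ)^2) ≤ |xm (m+1) - xm (m'+1)| := by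
        rw [abs_sub_comm]; exact le_trans this (le_abs_self _)
      rw [h2δ] at hd; linarith
  set U : Finset ℕ := (Finset.Ico n (3*n)) \ S with hU
  have hUcard : n ≤ U.card := by
    have h1 : S ⊆ Finset.Ico n (3*n) := Finset.filter_subset _ _
    have h2 : U.card = 2*n - S.card := by
      rw [hU, Finset.card_sdiff_of_subset h1, Nat.card_Ico]; congr 1; omega
    omega
  have hterm : ∀ m ∈ U,
      ENNReal.ofReal (gam/(9*(n:ℝ)^2)) * ENNReal.ofReal (δ^r)
        ≤ ENNReal.ofReal (gam / ((m:ℝ)+1)^2) * (⨅ a ∈ A, edist (xm (m+1)) a ^ r) := by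
    intro m hm
    rw [hU, Finset.mem_sdiff] at hm
    obtain ⟨hmI, hmS⟩ := hm
    have hmI' := Finset.mem_Ico.1 hmI
    have hfar : ∀ a ∈ A, δ ≤ |xm (m+1) - a| := by
      intro a ha
      by_contra hlt
      exact hmS (Finset.mem_filter.2 ⟨hmI, a, ha, by linarith⟩)
    have hinf : ENNReal.ofReal (δ^r) ≤ ⨅ a ∈ A, edist (xm (m+1)) a ^ r := by
      refine le_iInf fun a => le_iInf fun ha => ?_
      rw [edist_dist, Real.dist_eq, ← ENNReal.ofReal_rpow_of_pos hδ0]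
      exact ENNReal.rpow_le_rpow (ENNReal.ofReal_le_ofReal (hfar a ha)) hr.le
    have hmass : ENNReal.ofReal (gam/(9*(n:ℝ)^2)) ≤ ENNReal.ofReal (gam / ((m:ℝ)+1)^2) := by
      apply ENNReal.ofReal_le_ofReal
      apply div_le_div_of_nonneg_left gam_pos.le (by positivity)
      have : ((m:ℝ)+1) ≤ 3*n := by
        have : (m:ℝ) < 3*n := by exact_mod_cast hmI'.2
        have hm1 : (m+1 : ℕ) ≤ 3*n := by omega
        exact_mod_cast hm1
      nlinarith
    exact mul_le_mul' hmass hinf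
  calc ENNReal.ofReal ((n:ℝ) * (gam/(9*(n:ℝ)^2)) * ((18*(n:ℝ)^2)⁻¹)^r)
      = (n : ℝ≥0∞) * (ENNReal.ofReal (gam/(9*(n:ℝ)^2)) * ENNReal.ofReal (δ^r)) := by
        rw [ENNReal.ofReal_mul (mul_nonneg (Nat.cast_nonneg n)
          (div_nonneg gam_pos.le (by positivity))),
          ENNReal.ofReal_mul (Nat.cast_nonneg n), ENNReal.ofReal_natCast, hδ, mul_assoc]
  _ ≤ (U.card : ℝ≥0∞) * (ENNReal.ofReal (gam/(9*(n:ℝ)^2)) * ENNReal.ofReal (δ^r)) := by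
        gcongr
        all_goals exact_mod_cast hUcard
  _ ≤ ∑ m ∈ U, ENNReal.ofReal (gam / ((m:ℝ)+1)^2) * (⨅ a ∈ A, edist (xm (m+1)) a ^ r) := by
        have h := Finset.card_nsmul_le_sum U _ _ hterm
        simpa [nsmul_eq_mul] using h
  _ ≤ ∑' m : ℕ, ENNReal.ofReal (gam / ((m:ℝ)+1)^2) * (⨅ a ∈ A, edist (xm (m+1)) a ^ r) :=
        ENNReal.sum_le_tsum U

lemma quantErr_anti (μ : Measure ℝ) (r : ℝ) {a b : ℕ} (h : a ≤ b) :
    quantErr μ r b ≤ quantErr μ r a :=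
  le_iInf fun A => le_iInf fun hA => iInf₂_le A (hA.trans h)

lemma rpow_sq_inv (x : ℝ) (hx : 0 < x) (r : ℝ) :
    ((x^2)⁻¹)^r = x^((-2:ℝ)*r) := by
  rw [Real.rpow_mul hx.le, Real.rpow_neg hx.le, show ((2:ℝ)) = ((2:ℕ):ℝ) by norm_num,
    Real.rpow_natCast, Real.inv_rpow (by positivity)]

/-- the quantization dimension of order `r` of `μE` exists and
equals `1/(2 + 1/r) = r/(2r+1)`. -/
theorem stmt19 (r : ℝ) (hr : 0 < r) :
    Tendsto
      (fun n : ℕ => Real.log n / (-Real.log ((quantErr μE r n).toReal ^ (1 / r))))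
      atTop (nhds (r / (2 * r + 1))) := by
  set L : ℝ := 2*r+1 with hLdef
  have hL0 : 0 < L := by simp only [hLdef]; linarith
  set c₁ : ℝ := (gam/9) * (18:ℝ)^(-r) with hc₁def
  set c₂ : ℝ := gam * (4:ℝ)^L with hc₂def
  have hg := gam_pos
  have hc₁ : 0 < c₁ := by
    have : (0:ℝ) < (18:ℝ)^(-r) := Real.rpow_pos_of_pos (by norm_num) _
    positivity
  have hc₂ : 0 < c₂ := by
    have : (0:ℝ) < (4:ℝ)^L := Real.rpow_pos_of_pos (by norm_num) _
    positivity
  set V : ℕ → ℝ := fun n => (quantErr μE r n).toReal with hV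
  -- finiteness for n ≥ 3
  have hfin : ∀ n : ℕ, 3 ≤ n → quantErr μE r n ≠ ⊤ := by
    intro n hn
    have h1 : quantErr μE r n ≤ quantErr μE r 3 := quantErr_anti _ _ hn
    have h2 := ub r hr 1 le_rfl
    norm_num at h2
    exact ne_top_of_le_ne_top (by simp) (h1.trans h2)
  -- upper bound
  have hub : ∀ n : ℕ, 4 ≤ n → V n ≤ c₂ * (n:ℝ)^(-L) := by
    intro n hn
    set N : ℕ := (n-1)/2 with hN
    have hN1 : 1 ≤ N := by omega
    have hNn : 2*N+1 ≤ n := by omega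
    have hNr : (0:ℝ) < N := by exact_mod_cast hN1
    have hnr : (4:ℝ) ≤ n := by exact_mod_cast hn
    have hq : quantErr μE r n ≤ ENNReal.ofReal ((gam / N) * (((N:ℝ)^2)⁻¹)^r) :=
      (quantErr_anti _ _ hNn).trans (ub r hr N hN1)
    have h1 : V n ≤ (gam / N) * (((N:ℝ)^2)⁻¹)^r :=
      ENNReal.toReal_le_of_le_ofReal
        (by positivity) hq
    refine h1.trans ?_
    -- (gam/N) * N^(-2r) = gam * N^(-L) ≤ gam * (n/4)^(-L) = c₂ * n^(-L)
    have hNq : (n:ℝ)/4 ≤ N := by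
      have h2 : n ≤ 2*N + 2 := by omega
      have h3 : (n:ℝ) ≤ 2*(N:ℝ) + 2 := by exact_mod_cast h2
      have h4 : (1:ℝ) ≤ N := by exact_mod_cast hN1
      linarith
    have e1 : (gam / N) * (((N:ℝ)^2)⁻¹)^r = gam * (N:ℝ)^(-L) := by
      rw [rpow_sq_inv _ hNr, show -L = (-1) + (-2:ℝ)*r by rw [hLdef]; ring,
        Real.rpow_add hNr, Real.rpow_neg_one]
      field_simp
    have e2 : (N:ℝ)^(-L) ≤ ((n:ℝ)/4)^(-L) :=
      Real.rpow_le_rpow_of_nonpos (by linarith) hNq (by linarith)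
    have e3 : ((n:ℝ)/4)^(-L) = (n:ℝ)^(-L) * (4:ℝ)^L := by
      rw [Real.div_rpow (by linarith) (by norm_num), Real.rpow_neg (by norm_num : (0:ℝ) ≤ 4),
        div_eq_mul_inv, inv_inv]
    rw [e1]
    calc gam * (N:ℝ)^(-L) ≤ gam * ((n:ℝ)/4)^(-L) := by
          exact mul_le_mul_of_nonneg_left e2 hg.le
    _ = c₂ * (n:ℝ)^(-L) := by rw [e3, hc₂def]; ring
  -- lower bound
  have hlb : ∀ n : ℕ, 4 ≤ n → c₁ * (n:ℝ)^(-L) ≤ V n := by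
    intro n hn
    have hnr : (4:ℝ) ≤ n := by exact_mod_cast hn
    have hn0 : (0:ℝ) < n := by linarith
    have hq := lb r hr n (by omega)
    have h1 : (n:ℝ) * (gam/(9*(n:ℝ)^2)) * ((18*(n:ℝ)^2)⁻¹)^r ≤ V n := by
      rw [hV]
      exact (ENNReal.ofReal_le_iff_le_toReal (hfin n (by omega))).1 hq
    refine le_trans (le_of_eq ?_) h1
    -- c₁ * n^(-L) = n * (gam/(9n²)) * ((18n²)⁻¹)^r
    have e1 : ((18*(n:ℝ)^2)⁻¹)^r = (18:ℝ)^(-r) * (((n:ℝ)^2)⁻¹)^r := by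
      rw [mul_inv, Real.mul_rpow (by positivity) (by positivity),
        Real.inv_rpow (by norm_num), ← Real.rpow_neg (by norm_num)]
    have e2 : (((n:ℝ)^2)⁻¹)^r = (n:ℝ)^((-2:ℝ)*r) := rpow_sq_inv _ hn0 r
    have e3 : (n:ℝ)^(-L) = (n:ℝ)⁻¹ * (n:ℝ)^((-2:ℝ)*r) := by
      rw [show -L = (-1) + (-2:ℝ)*r by rw [hLdef]; ring, Real.rpow_add hn0,
        Real.rpow_neg_one]
    rw [e1, e2, e3, hc₁def]
    have hn' : (n:ℝ) ≠ 0 := by linarith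
    field_simp
  -- positivity of V for n ≥ 4
  have hVpos : ∀ n : ℕ, 4 ≤ n → 0 < V n := by
    intro n hn
    have := hlb n hn
    have h0 : (0:ℝ) < c₁ * (n:ℝ)^(-L) := by
      have : (0:ℝ) < (n:ℝ)^(-L) := Real.rpow_pos_of_pos (by exact_mod_cast (by omega : 0 < n)) _
      positivity
    linarith [hlb n hn]
  -- the normalized log ratio
  set D : ℕ → ℝ := fun n => (-Real.log (V n)) / Real.log n with hD
  have hlogn : ∀ n : ℕ, 4 ≤ n → 0 < Real.log n := by
    intro n hn
    apply Real.log_pos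
    exact_mod_cast (by omega : 1 < n)
  have hDub : ∀ n : ℕ, 4 ≤ n → D n ≤ L - Real.log c₁ / Real.log n := by
    intro n hn
    have h1 := hlb n hn
    have hn0 : (0:ℝ) < n := by exact_mod_cast (by omega : 0 < n)
    have h2 : Real.log c₁ + (-L) * Real.log n ≤ Real.log (V n) := by
      have := Real.log_le_log (by positivity) h1
      rwa [Real.log_mul (ne_of_gt hc₁) (ne_of_gt (Real.rpow_pos_of_pos hn0 _)),
        Real.log_rpow hn0] at this
    rw [hD]
    rw [div_le_iff₀ (hlogn n hn), sub_mul, div_mul_cancel₀ _ (ne_of_gt (hlogn n hn))]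
    linarith
  have hDlb : ∀ n : ℕ, 4 ≤ n → L - Real.log c₂ / Real.log n ≤ D n := by
    intro n hn
    have h1 := hub n hn
    have hn0 : (0:ℝ) < n := by exact_mod_cast (by omega : 0 < n)
    have h2 : Real.log (V n) ≤ Real.log c₂ + (-L) * Real.log n := by
      have := Real.log_le_log (hVpos n hn) h1
      rwa [Real.log_mul (ne_of_gt hc₂) (ne_of_gt (Real.rpow_pos_of_pos hn0 _)),
        Real.log_rpow hn0] at this
    rw [hD]
    rw [le_div_iff₀ (hlogn n hn), sub_mul, div_mul_cancel₀ _ (ne_of_gt (hlogn n hn))]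
    linarith
  -- D tends to L
  have hlogtop : Tendsto (fun n : ℕ => Real.log n) atTop atTop :=
    Real.tendsto_log_atTop.comp tendsto_natCast_atTop_atTop
  have haux : ∀ c : ℝ, Tendsto (fun n : ℕ => L - Real.log c / Real.log n) atTop (nhds L) := by
    intro c
    have h1 : Tendsto (fun n : ℕ => Real.log c / Real.log n) atTop (nhds 0) := by
      simp only [div_eq_mul_inv]
      have := (tendsto_inv_atTop_zero).comp hlogtop
      simpa using this.const_mul (Real.log c)
    simpa using (tendsto_const_nhds (x := L)).sub h1
  have hDL : Tendsto D atTop (nhds L) := by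
    refine tendsto_of_tendsto_of_tendsto_of_le_of_le' (haux c₂) (haux c₁) ?_ ?_
    · exact eventually_atTop.2 ⟨4, hDlb⟩
    · exact eventually_atTop.2 ⟨4, hDub⟩
  -- conclude
  have hfinal : Tendsto (fun n : ℕ => r / D n) atTop (nhds (r / L)) :=
    (tendsto_const_nhds (x := r)).div hDL (ne_of_gt hL0)
  have heq : ∀ᶠ n : ℕ in atTop,
      r / D n = Real.log n / (-Real.log ((quantErr μE r n).toReal ^ (1 / r))) := by
    refine eventually_atTop.2 ⟨4, fun n hn => ?_⟩
    have hVp := hVpos n hn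
    have hlog : Real.log ((V n) ^ (1/r)) = (1/r) * Real.log (V n) :=
      Real.log_rpow hVp _
    show r / D n = Real.log n / (-Real.log ((V n) ^ (1 / r)))
    rw [hlog, hD]
    set a := Real.log (n:ℕ)
    set b := Real.log (V n)
    rw [div_div_eq_mul_div]
    have : -(1/r * b) = (-b)/r := by ring
    rw [this, div_div_eq_mul_div]
    ring
  exact Tendsto.congr' heq hfinal
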